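/- arXiv:2306.08594 — 2 statements merged into one kernel-verified Lean document; each statement's English description precedes it below -/
import Mathlib

section
/- Let G be a strongly connected directed graph with all distances between distinct vertices at most 2, and let V1, V2 ⊆ V(G) be disjoint nonempty vertex sets such that there are no edges of G between V1 and V2 (in either direction). Let R1 ⊆ V1 be a set resolving V1 in G and R2 ⊆ V2 a set resolving V2 in G, both nonempty. If V1 has no 2-vertex w.r.t. R1 or V2 has no 2-vertex w.r.t. R2, then R1 ∪ R2 resolves V1 ∪ V2 in G. -/
/-!
A vertex `u ∉ R₁` of `V₁` that is not a 2-vertex has an in-neighbour `w ∈ R₁`, so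
`d(w, u) = 1`; as there are no edges from `V₁` to `V₂`, `d(w, v) ≠ 1` for every `v ∈ V₂`.
Hence every pair `u ∈ V₁`, `v ∈ V₂` is resolved by `R₁`, and pairs inside `V₁` or `V₂` are
resolved by `R₁` or `R₂`.
-/

universe u

/-- There is a directed walk of length `n` from `u` to `v` in the digraph
with edge relation `E`. -/
def HasWalkLen {V : Type u} (E : V → V → Prop) (u v : V) (n : ℕ) : Prop :=
  ∃ f : Fin (n + 1) → V, f 0 = u ∧ f (Fin.last n) = v ∧
    ∀ i : Fin n, E (f i.castSucc) (f i.succ)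

/-- `v` is reachable from `u` by a directed walk. -/
def Reaches {V : Type u} (E : V → V → Prop) (u v : V) : Prop :=
  ∃ n, HasWalkLen E u v n

/-- Directed distance from `u` to `v` (length of a shortest directed path);
a junk value (`sInf ∅ = 0`) if `v` is unreachable from `u`. -/
noncomputable def ddist {V : Type u} (E : V → V → Prop) (u v : V) : ℕ :=
  sInf {n | HasWalkLen E u v n}

/-- `w` resolves the vertices `u` and `v`: `w = u`, or `w = v`, or both
distances from `w` are defined (reachable) and different. -/
def Resolves {V : Type u} (E : V → V → Prop) (w u v : V) : Prop :=
  w = u ∨ w = v ∨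
    (Reaches E w u ∧ Reaches E w v ∧ ddist E w u ≠ ddist E w v)

/-- `R` resolves the vertex set `U`: every pair of distinct vertices of `U`
is resolved by some member of `R`. -/
def ResolvesSet {V : Type u} (E : V → V → Prop) (R U : Set V) : Prop :=
  ∀ u ∈ U, ∀ v ∈ U, u ≠ v → ∃ w ∈ R, Resolves E w u v

/-- The digraph is strongly connected on the vertex set `S`. -/
def SConn {V : Type u} (E : V → V → Prop) (S : Set V) : Prop :=
  ∀ u ∈ S, ∀ v ∈ S, Reaches E u v

/-- `u` is a 1-vertex w.r.t. `R`: `u ∉ R` and every `w ∈ R` has an edge to `u`. -/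
def OneVertex {V : Type u} (E : V → V → Prop) (R : Set V) (u : V) : Prop :=
  u ∉ R ∧ ∀ w ∈ R, E w u

/-- `u` is a 2-vertex w.r.t. `R`: `u ∉ R` and no `w ∈ R` has an edge to `u`. -/
def TwoVertex {V : Type u} (E : V → V → Prop) (R : Set V) (u : V) : Prop :=
  u ∉ R ∧ ∀ w ∈ R, ¬ E w u

/-- Directed co-graphs with vertex set `S` and edge relation `E`, built
inductively from single vertices by disjoint union, join and directed join. -/
inductive IsDicograph {V : Type u} : Set V → (V → V → Prop) → Prop
  | single (v : V) : IsDicograph {v} fun _ _ => False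
  | disjUnion {S₁ S₂ : Set V} {E₁ E₂ : V → V → Prop} :
      IsDicograph S₁ E₁ → IsDicograph S₂ E₂ → Disjoint S₁ S₂ →
      IsDicograph (S₁ ∪ S₂) fun u v => E₁ u v ∨ E₂ u v
  | join {S₁ S₂ : Set V} {E₁ E₂ : V → V → Prop} :
      IsDicograph S₁ E₁ → IsDicograph S₂ E₂ → Disjoint S₁ S₂ →
      IsDicograph (S₁ ∪ S₂) fun u v =>
        E₁ u v ∨ E₂ u v ∨ (u ∈ S₁ ∧ v ∈ S₂) ∨ (u ∈ S₂ ∧ v ∈ S₁)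
  | dirJoin {S₁ S₂ : Set V} {E₁ E₂ : V → V → Prop} :
      IsDicograph S₁ E₁ → IsDicograph S₂ E₂ → Disjoint S₁ S₂ →
      IsDicograph (S₁ ∪ S₂) fun u v => E₁ u v ∨ E₂ u v ∨ (u ∈ S₁ ∧ v ∈ S₂)

section Digraph

variable {V : Type u} {E : V → V → Prop} {a b w x y : V}

lemma HasWalkLen.eq_of_zero (h : HasWalkLen E a b 0) : a = b := by
  obtain ⟨f, h0, hl, -⟩ := h
  rw [← h0, ← hl]
  rfl

lemma hasWalkLen_one_iff : HasWalkLen E a b 1 ↔ E a b := by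
  constructor
  · rintro ⟨f, h0, hl, hs⟩
    simpa [h0, ← hl] using hs 0
  · intro h
    refine ⟨![a, b], rfl, rfl, fun i => ?_⟩
    fin_cases i
    simpa using h

lemma Reaches.hasWalkLen_ddist (h : Reaches E a b) : HasWalkLen E a b (ddist E a b) :=
  Nat.sInf_mem h

lemma ddist_eq_one_of_adj (hne : a ≠ b) (h : E a b) : ddist E a b = 1 := by
  have hreach : Reaches E a b := ⟨1, hasWalkLen_one_iff.2 h⟩
  have hle : ddist E a b ≤ 1 := Nat.sInf_le (hasWalkLen_one_iff.2 h)
  have hpos : ddist E a b ≠ 0 := fun h0 =>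
    hne (h0 ▸ hreach.hasWalkLen_ddist).eq_of_zero
  omega

lemma ddist_ne_one_of_not_adj (hr : Reaches E a b) (h : ¬ E a b) : ddist E a b ≠ 1 :=
  fun h1 => h (hasWalkLen_one_iff.1 (h1 ▸ hr.hasWalkLen_ddist))

lemma resolves_comm : Resolves E w x y ↔ Resolves E w y x := by
  unfold Resolves
  constructor <;> rintro (h | h | ⟨hx, hy, hne⟩) <;> tauto

lemma resolves_of_adj_of_not_adj (hr : Reaches E w y) (hx : E w x) (hy : ¬ E w y) :
    Resolves E w x y := by
  by_cases hwx : w = x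
  · exact Or.inl hwx
  · refine Or.inr (Or.inr ⟨⟨1, hasWalkLen_one_iff.2 hx⟩, hr, ?_⟩)
    rw [ddist_eq_one_of_adj hwx hx]
    exact (ddist_ne_one_of_not_adj hr hy).symm

lemma exists_resolves_of_not_twoVertex (hsc : SConn E Set.univ) {R U : Set V}
    (h2v : ¬ ∃ u ∈ U, TwoVertex E R u) (hx : x ∈ U) (hy : ∀ w ∈ R, ¬ E w y) :
    ∃ w ∈ R, Resolves E w x y := by
  by_cases hxR : x ∈ R
  · exact ⟨x, hxR, Or.inl rfl⟩
  · obtain ⟨w, hwR, hwx⟩ : ∃ w ∈ R, E w x := by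
      by_contra! hno
      exact h2v ⟨x, hx, hxR, hno⟩
    exact ⟨w, hwR, resolves_of_adj_of_not_adj (hsc w trivial y trivial) hwx (hy w hwR)⟩

lemma ResolvesSet.union {R₁ R₂ V₁ V₂ : Set V}
    (hres₁ : ResolvesSet E R₁ V₁) (hres₂ : ResolvesSet E R₂ V₂)
    (hcross : ∀ x ∈ V₁, ∀ y ∈ V₂, ∃ w ∈ R₁ ∪ R₂, Resolves E w x y) :
    ResolvesSet E (R₁ ∪ R₂) (V₁ ∪ V₂) := by
  rintro x (hx | hx) y (hy | hy) hxy
  · obtain ⟨w, hw, hres⟩ := hres₁ x hx y hy hxy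
    exact ⟨w, Or.inl hw, hres⟩
  · exact hcross x hx y hy
  · obtain ⟨w, hw, hres⟩ := hcross y hy x hx
    exact ⟨w, hw, resolves_comm.1 hres⟩
  · obtain ⟨w, hw, hres⟩ := hres₂ x hx y hy hxy
    exact ⟨w, Or.inr hw, hres⟩

end Digraph

theorem stmt_4_general {V : Type u} {E : V → V → Prop}
    (hsc : SConn E Set.univ)
    {V₁ V₂ R₁ R₂ : Set V}
    (hnoedge : ∀ x ∈ V₁, ∀ y ∈ V₂, ¬ E x y ∧ ¬ E y x)
    (hR₁ : R₁ ⊆ V₁) (hR₂ : R₂ ⊆ V₂)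
    (hres₁ : ResolvesSet E R₁ V₁) (hres₂ : ResolvesSet E R₂ V₂)
    (h2v : (¬ ∃ u ∈ V₁, TwoVertex E R₁ u) ∨ (¬ ∃ u ∈ V₂, TwoVertex E R₂ u)) :
    ResolvesSet E (R₁ ∪ R₂) (V₁ ∪ V₂) := by
  refine hres₁.union hres₂ fun x hx y hy => ?_
  rcases h2v with h | h
  · obtain ⟨w, hw, hres⟩ := exists_resolves_of_not_twoVertex hsc h hx
      fun w hw => (hnoedge w (hR₁ hw) y hy).1
    exact ⟨w, Or.inl hw, hres⟩
  · obtain ⟨w, hw, hres⟩ := exists_resolves_of_not_twoVertex hsc h hy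
      fun w hw => (hnoedge x hx w (hR₂ hw)).2
    exact ⟨w, Or.inr hw, resolves_comm.1 hres⟩

/-- Disjoint union case: if one side has no 2-vertex, the union of the two
resolving sets resolves the union of the two vertex sets. -/
theorem stmt_4 {V : Type u} {E : V → V → Prop}
    (hsc : SConn E Set.univ)
    (hdiam : ∀ u v : V, u ≠ v → ddist E u v ≤ 2)
    {V₁ V₂ R₁ R₂ : Set V}
    (hdisj : Disjoint V₁ V₂) (hV₁ : V₁.Nonempty) (hV₂ : V₂.Nonempty)
    (hnoedge : ∀ x ∈ V₁, ∀ y ∈ V₂, ¬ E x y ∧ ¬ E y x)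
    (hR₁ : R₁ ⊆ V₁) (hR₂ : R₂ ⊆ V₂)
    (hR₁ne : R₁.Nonempty) (hR₂ne : R₂.Nonempty)
    (hres₁ : ResolvesSet E R₁ V₁) (hres₂ : ResolvesSet E R₂ V₂)
    (h2v : (¬ ∃ u ∈ V₁, TwoVertex E R₁ u) ∨ (¬ ∃ u ∈ V₂, TwoVertex E R₂ u)) :
    ResolvesSet E (R₁ ∪ R₂) (V₁ ∪ V₂) :=
  stmt_4_general hsc hnoedge hR₁ hR₂ hres₁ hres₂ h2v
end

section
/- No directed co-graph G contains four distinct vertices u1, u2, w1, w2 such that (w1,u1), (w2,u1), (u1,u2) ∈ E(G) and (w1,u2), (w2,u2), (u2,u1) ∉ E(G). -/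
universe u

/-! Only `w₁`, `u₁`, `u₂` matter: in a directed co-graph, an edge `u → v` without its reverse
is transitive from the left, i.e. `w → u` forces `w → v`. In a composite graph the three vertices
are forced into a single part, where the edges are those of that part, so induction applies. -/

namespace IsDicograph

variable {V : Type u} {S : Set V} {E : V → V → Prop}

theorem mem_of_edge (hG : IsDicograph S E) {x y : V} (h : E x y) : x ∈ S ∧ y ∈ S := by
  induction hG <;> grind

theorem edge_trans_of_not_edge (hG : IsDicograph S E) {w u v : V}
    (hwu : E w u) (huv : E u v) (hvu : ¬ E v u) : E w v := by
  by_contra hwv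
  induction hG generalizing w u v with
  | single => exact hwu
  | @disjUnion S₁ S₂ E₁ E₂ h₁ h₂ hd ih₁ ih₂ =>
    -- no edge crosses the parts, and `w → u → v` is a path
    have hpart : (w ∈ S₁ ∧ u ∈ S₁ ∧ v ∈ S₁) ∨ (w ∈ S₂ ∧ u ∈ S₂ ∧ v ∈ S₂) := by
      grind [h₁.mem_of_edge, h₂.mem_of_edge]
    grind [h₁.mem_of_edge, h₂.mem_of_edge]
  | @join S₁ S₂ E₁ E₂ h₁ h₂ hd ih₁ ih₂ =>
    -- crossing pairs are edges both ways, but `v ↛ u` and `w ↛ v`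
    have hpart : (w ∈ S₁ ∧ u ∈ S₁ ∧ v ∈ S₁) ∨ (w ∈ S₂ ∧ u ∈ S₂ ∧ v ∈ S₂) := by
      grind [h₁.mem_of_edge, h₂.mem_of_edge]
    grind [h₁.mem_of_edge, h₂.mem_of_edge]
  | @dirJoin S₁ S₂ E₁ E₂ h₁ h₂ hd ih₁ ih₂ =>
    -- crossing pairs are edges exactly from `S₁` to `S₂`, so `w → u`, `u → v`, `v ↛ u`, `w ↛ v`
    -- cannot place the three vertices in both parts
    have hpart : (w ∈ S₁ ∧ u ∈ S₁ ∧ v ∈ S₁) ∨ (w ∈ S₂ ∧ u ∈ S₂ ∧ v ∈ S₂) := by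
      grind [h₁.mem_of_edge, h₂.mem_of_edge]
    grind [h₁.mem_of_edge, h₂.mem_of_edge]

end IsDicograph

/-- No directed co-graph contains the four-vertex configuration of
Figure 5 (3.). -/
theorem stmt_9 {V : Type u} {S : Set V} {E : V → V → Prop}
    (hG : IsDicograph S E) :
    ¬ ∃ u₁ u₂ w₁ w₂ : V,
      u₁ ∈ S ∧ u₂ ∈ S ∧ w₁ ∈ S ∧ w₂ ∈ S ∧
      u₁ ≠ u₂ ∧ u₁ ≠ w₁ ∧ u₁ ≠ w₂ ∧ u₂ ≠ w₁ ∧ u₂ ≠ w₂ ∧ w₁ ≠ w₂ ∧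
      E w₁ u₁ ∧ E w₂ u₁ ∧ E u₁ u₂ ∧
      ¬ E w₁ u₂ ∧ ¬ E w₂ u₂ ∧ ¬ E u₂ u₁ := by
  rintro ⟨u₁, u₂, w₁, -, -, -, -, -, -, -, -, -, -, -, hwu, -, huv, hwv, -, hvu⟩
  exact hwv (hG.edge_trans_of_not_edge hwu huv hvu)
end
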